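/- arXiv:1304.0172 — 2 statements merged into one kernel-verified Lean document; each statement's English description precedes it below -/
import Mathlib

section
/- Howard–Volodin theorem: For a prime p and m, t ∈ ℕ, the number of (m+1)-tuples (e_0,...,e_m) of non-negative integers with e_0 + ... + e_m = t such that the multinomial coefficient t!/(e_0!⋯e_m!) is divisible by p equals C(m+t, t) − Π_{σ∈ℕ} C(m + t_σ, t_σ), where t_σ are the base-p digits of t. -/
/-!
By Legendre's formula, `v_p(t! / ∏ e_i!) = ∑_{k ≥ 1} (⌊t/p^k⌋ - ∑ᵢ ⌊e_i/p^k⌋)`, a sum of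
non-negative terms, so `p` does not divide the multinomial coefficient exactly when
`∑ᵢ ⌊e_i/p^k⌋ = ⌊t/p^k⌋` for every `k` (Kummer: the base-`p` addition of the `e_i` has no carry).
This condition splits into "the last digits `e_i mod p` sum to `t mod p`" and the same condition
for the tuple `⌊e_i/p⌋` and `⌊t/p⌋`. Hence the tuples with non-divisible coefficient are counted by
the product over the digits `t_σ` of the number `C(m + t_σ, t_σ)` of `(m+1)`-tuples summing to
`t_σ`, and the theorem follows by complementary counting against `C(m + t, t)`.
-/

/-- The σ-th digit of `x` in base `p`. -/
def digit (p x σ : ℕ) : ℕ := x / p ^ σ % p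

open Finset

theorem Finset.Nat.card_antidiagonalTuple (k n : ℕ) :
    #(Nat.antidiagonalTuple k n) = (k + n - 1).choose n := by
  rw [← piAntidiag_univ_fin_eq_antidiagonalTuple, ← map_sym_eq_piAntidiag, card_map, sym_univ,
    card_univ, Sym.card_sym_eq_choose, Fintype.card_fin]

namespace Nat

variable {p : ℕ}

theorem sum_div_le_sum_div {ι : Type*} (s : Finset ι) (f : ι → ℕ) (d : ℕ) :
    ∑ i ∈ s, f i / d ≤ (∑ i ∈ s, f i) / d := by
  rcases d.eq_zero_or_pos with rfl | hd
  · simp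
  rw [Nat.le_div_iff_mul_le hd, Finset.sum_mul]
  exact Finset.sum_le_sum fun i _ => Nat.div_mul_le_self _ _

theorem sum_add_factorization_multinomial (hp : p.Prime) {ι : Type*} (s : Finset ι) (f : ι → ℕ)
    {b : ℕ} (hb : log p (∑ i ∈ s, f i) < b) :
    ∑ k ∈ Ico 1 b, ∑ i ∈ s, f i / p ^ k + (multinomial s f).factorization p
      = ∑ k ∈ Ico 1 b, (∑ i ∈ s, f i) / p ^ k := by
  have : Fact p.Prime := ⟨hp⟩
  have hfac : ∀ n, log p n < b → (n !).factorization p = ∑ k ∈ Ico 1 b, n / p ^ k :=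
    fun n hn => (factorization_def _ hp).trans (padicValNat_factorial hn)
  have hle : ∀ i ∈ s, log p (f i) < b := fun i hi =>
    (log_mono_right (single_le_sum (fun _ _ => Nat.zero_le _) hi)).trans_lt hb
  rw [← hfac _ hb, ← multinomial_spec s f,
    factorization_mul (prod_ne_zero_iff.mpr fun i _ => factorial_ne_zero _)
      (multinomial_pos s f).ne',
    factorization_prod fun i _ => factorial_ne_zero _, Finsupp.add_apply,
    Finsupp.finsetSum_apply, sum_congr rfl fun i hi => hfac _ (hle i hi), sum_comm]

/-- Kummer's criterion: `p` does not divide the multinomial coefficient iff adding the `f i` in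
base `p` produces no carry. -/
theorem not_dvd_multinomial_iff (hp : p.Prime) {ι : Type*} (s : Finset ι) (f : ι → ℕ) :
    ¬ p ∣ multinomial s f ↔ ∀ k, ∑ i ∈ s, f i / p ^ k = (∑ i ∈ s, f i) / p ^ k := by
  set b := log p (∑ i ∈ s, f i) + 1
  have hlegendre := sum_add_factorization_multinomial hp s f (lt_add_one _)
  rw [hp.dvd_iff_one_le_factorization (multinomial_pos s f).ne', not_le, Nat.lt_one_iff]
  constructor
  · intro h k
    rcases k.eq_zero_or_pos with rfl | hk
    · simp
    rcases lt_or_ge k b with hkb | hkb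
    · rw [h, add_zero, sum_eq_sum_iff_of_le fun k _ => sum_div_le_sum_div s f _] at hlegendre
      exact hlegendre k (mem_Ico.mpr ⟨hk, hkb⟩)
    · have hlt : ∑ i ∈ s, f i < p ^ k :=
        (lt_pow_succ_log_self hp.one_lt _).trans_le (pow_le_pow_right₀ hp.pos hkb)
      refine le_antisymm (sum_div_le_sum_div s f _) ?_
      rw [Nat.div_eq_of_lt hlt]
      exact Nat.zero_le _
  · intro h
    rw [sum_congr rfl fun k _ => h k] at hlegendre
    omega

end Nat

theorem digit_zero (p x : ℕ) : digit p x 0 = x % p := by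
  simp [digit]

theorem digit_succ (p x σ : ℕ) : digit p x (σ + 1) = digit p (x / p) σ := by
  rw [digit, digit, pow_succ', Nat.div_div_eq_div_mul]

theorem Nat.div_pow_succ (x p k : ℕ) : x / p ^ (k + 1) = x / p / p ^ k := by
  rw [pow_succ', Nat.div_div_eq_div_mul]

def notDvdTuples (p n t : ℕ) : Finset (Fin n → ℕ) :=
  (Nat.antidiagonalTuple n t).filter fun e => ¬ p ∣ Nat.multinomial univ e

section notDvdTuples

variable {p n : ℕ}

theorem mem_notDvdTuples_iff (hp : p.Prime) {t : ℕ} {e : Fin n → ℕ} :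
    e ∈ notDvdTuples p n t ↔ ∀ k, ∑ i, e i / p ^ k = t / p ^ k := by
  rw [notDvdTuples, mem_filter, Nat.mem_antidiagonalTuple, Nat.not_dvd_multinomial_iff hp]
  constructor
  · rintro ⟨rfl, h⟩
    exact h
  · intro h
    have ht : ∑ i, e i = t := by simpa using h 0
    exact ⟨ht, ht ▸ h⟩

/-- No carry in base `p` means: no carry in the last digit, and none in the higher digits. -/
theorem mem_notDvdTuples_iff_mod_div (hp : p.Prime) {t : ℕ} {e : Fin n → ℕ} :
    e ∈ notDvdTuples p n t ↔
      (fun i => e i % p) ∈ Nat.antidiagonalTuple n (t % p) ∧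
        (fun i => e i / p) ∈ notDvdTuples p n (t / p) := by
  simp only [mem_notDvdTuples_iff hp, Nat.mem_antidiagonalTuple, ← Nat.div_pow_succ]
  have hdecomp : ∀ x, p * (x / p) + x % p = x := fun x => Nat.div_add_mod x p
  have hsum : ∑ i, e i = p * ∑ i, e i / p + ∑ i, e i % p := by
    rw [mul_sum, ← sum_add_distrib]
    exact (sum_congr rfl fun i _ => hdecomp (e i)).symm
  constructor
  · intro h
    have h1 : ∑ i, e i / p = t / p := by simpa using h 1
    refine ⟨?_, fun k => h (k + 1)⟩
    have h0 : ∑ i, e i = t := by simpa using h 0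
    rw [h0, h1] at hsum
    have := hdecomp t
    omega
  · rintro ⟨hmod, h⟩ k
    cases k with
    | zero =>
      have h1 : ∑ i, e i / p = t / p := by simpa using h 0
      rw [h1, hmod] at hsum
      simpa [hdecomp] using hsum
    | succ k => exact h k

/-- Split every entry into its last base-`p` digit and the rest. -/
theorem card_notDvdTuples_eq_mul (hp : p.Prime) (t : ℕ) :
    #(notDvdTuples p n t) = #(Nat.antidiagonalTuple n (t % p)) * #(notDvdTuples p n (t / p)) := by
  rw [← card_product]
  have hlt : ∀ g ∈ Nat.antidiagonalTuple n (t % p), ∀ i, g i < p := fun g hg i =>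
    ((Nat.mem_antidiagonalTuple.mp hg ▸ single_le_sum (fun _ _ => Nat.zero_le _) (mem_univ i))
      ).trans_lt (Nat.mod_lt t hp.pos)
  have hsplit : ∀ gf ∈ Nat.antidiagonalTuple n (t % p) ×ˢ notDvdTuples p n (t / p),
      ((fun i => (p * gf.2 i + gf.1 i) % p), (fun i => (p * gf.2 i + gf.1 i) / p)) = gf := by
    rintro ⟨g, f⟩ hgf
    have hg := hlt g (mem_product.mp hgf).1
    ext i <;> dsimp only
    · rw [Nat.mul_add_mod, Nat.mod_eq_of_lt (hg i)]
    · rw [Nat.mul_add_div hp.pos, Nat.div_eq_of_lt (hg i), add_zero]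
  refine card_nbij' (fun e => (fun i => e i % p, fun i => e i / p))
    (fun gf i => p * gf.2 i + gf.1 i) (fun e he => ?_) (fun gf hgf => ?_) (fun e _ => ?_)
    (fun gf hgf => ?_)
  · exact mem_product.mpr ((mem_notDvdTuples_iff_mod_div hp).mp he)
  · exact (mem_notDvdTuples_iff_mod_div hp).mpr (mem_product.mp ((hsplit gf hgf).symm ▸ hgf))
  · funext i
    exact Nat.div_add_mod (e i) p
  · exact hsplit gf hgf

theorem card_notDvdTuples_eq_prod (hp : p.Prime) {b t : ℕ} (ht : t < p ^ b) :
    #(notDvdTuples p n t) = ∏ σ ∈ range b, #(Nat.antidiagonalTuple n (digit p t σ)) := by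
  induction b generalizing t with
  | zero =>
    obtain rfl : t = 0 := by simpa using ht
    rw [prod_range_zero, card_eq_one]
    refine ⟨0, eq_singleton_iff_unique_mem.mpr ⟨?_, fun e he => ?_⟩⟩
    · simp [mem_notDvdTuples_iff hp]
    · have := (mem_filter.mp he).1
      rwa [Nat.antidiagonalTuple_zero_right, mem_singleton] at this
  | succ b ih =>
    rw [card_notDvdTuples_eq_mul hp, ih ((Nat.div_lt_iff_lt_mul hp.pos).mpr (pow_succ p b ▸ ht)),
      prod_range_succ', digit_zero, mul_comm]
    simp only [digit_succ]

end notDvdTuples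

theorem howard_volodin_general (p : ℕ) (hp : p.Prime) (m t : ℕ) :
    ((Finset.Nat.antidiagonalTuple (m + 1) t).filter fun e =>
        p ∣ Nat.multinomial Finset.univ e).card
      = Nat.choose (m + t) t -
          ∏ σ ∈ Finset.range (t + 1), Nat.choose (m + digit p t σ) (digit p t σ) := by
  have hdigits : t < p ^ (t + 1) :=
    (Nat.lt_pow_self hp.one_lt).trans (Nat.pow_lt_pow_right hp.one_lt t.lt_add_one)
  have hnotDvd : #(notDvdTuples p (m + 1) t)
      = ∏ σ ∈ range (t + 1), (m + digit p t σ).choose (digit p t σ) := by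
    rw [card_notDvdTuples_eq_prod hp hdigits]
    refine prod_congr rfl fun σ _ => ?_
    rw [Finset.Nat.card_antidiagonalTuple, Nat.add_right_comm, Nat.add_sub_cancel]
  have htotal := card_filter_add_card_filter_not (s := Nat.antidiagonalTuple (m + 1) t)
    fun e => p ∣ Nat.multinomial univ e
  rw [Finset.Nat.card_antidiagonalTuple, Nat.add_right_comm, Nat.add_sub_cancel] at htotal
  rw [← hnotDvd, notDvdTuples, ← htotal, Nat.add_sub_cancel]

/-- **Howard–Volodin theorem**: the number of `(m+1)`-tuples `(e_0,…,e_m)` of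
non-negative integers with `e_0 + ⋯ + e_m = t` whose multinomial coefficient
`t!/(e_0!⋯e_m!)` is divisible by the prime `p` equals
`C(m+t,t) − ∏_σ C(m + t_σ, t_σ)`, where `t_σ` are the base-`p` digits of `t`.
(Digits with index `σ > t` vanish, and `C(m+0,0) = 1`, so the product over
`σ < t+1` is the full product.) -/
theorem howard_volodin (p : ℕ) (hp : p.Prime) (m t : ℕ) (hm : 1 ≤ m) :
    ((Finset.Nat.antidiagonalTuple (m + 1) t).filter fun e =>
        p ∣ Nat.multinomial Finset.univ e).card
      = Nat.choose (m + t) t -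
          ∏ σ ∈ Finset.range (t + 1), Nat.choose (m + digit p t σ) (digit p t σ) :=
  howard_volodin_general p hp m t
end

section
/- Let F be a field of characteristic p > 0 with #F ≥ k+1, n ≥ 2, and b := n+1 with base-p digits b_σ. Suppose T(R,b) ≤ k+1 < T(Q,b) where T(R,b) := Σ_{μ≥R} b_μ p^μ, and at most one digit b_σ is non-zero for σ ∈ {Q,...,R−1}. Then the k-nucleus of the normal rational curve V_1^n has projective dimension n − (1 + Σ_{μ=0}^{R−1} n_μ p^μ) · Π_{σ=R}^∞ (n_σ + 1), where n_σ are the base-p digits of n. -/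
/-!
Let `P(u) = (C(r,s) u^(r-s))` be the Pascal matrix, so that `P(u) P(v) = P(u + v)`. The
osculating space at `u` is spanned by the first `c = k + 1` columns of `P(u)`. Hence the rows
`r ≥ c` of `P(-u)` vanish on it, and `e_i` lies in it as soon as `C(s,i) = 0` in `F` for all
`c ≤ s ≤ n`. Conversely, for `x` in the nucleus, row `r` of `P(u) x` is a polynomial in `u` of
degree `< c ≤ #F` vanishing on `F`, which forces `C(r,i) x_i = 0`. So the nucleus is the
coordinate subspace on the indices `i ≥ n + 1 - c` with `p ∣ C(r,i)` for all `c ≤ r ≤ n`,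
and by Lucas' theorem the latter says that `i` is digitwise below no such `r`.

The digit hypotheses say that `(n + 1) mod p^R = β p^σ + m` with `m < n + 1 - c` and
`m < p^σ`. Every `j < β p^σ + m` is digitwise below some `ρ ≥ β p^σ - 1` with
`ρ < β p^σ + m`, so the excluded indices are exactly the `i` with
`i mod p^R ≤ n mod p^R` and `⌊i / p^R⌋` digitwise below `⌊n / p^R⌋`. There are
`(1 + n mod p^R) · ∏_{σ ≥ R} (n_σ + 1)` of them.
-/

/-- The `k`-osculating subspace (here parametrized by `c = k+1`, the number of spanning
columns) of the normal rational curve `x ↦ (1, x, …, xⁿ)` in `F^{n+1}` at the point with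
parameter `u`: the span of the first `c` columns of the matrix with entries
`C(r,s) u^{r−s}` (`0 ≤ s ≤ r ≤ n`), i.e. of the point and its first `c-1`
Hasse-derivative points. -/
def oscSub (F : Type) [Field F] (n : ℕ) (u : F) (c : ℕ) : Submodule F (Fin (n + 1) → F) :=
  Submodule.span F
    (Set.range fun s : Fin c => fun r : Fin (n + 1) => (r.1.choose s.1 : F) * u ^ (r.1 - s.1))

/-- The `k`-osculating subspace (with `c = k+1`) at the point `u = ∞` of the curve:
the span of the last `c` standard basis vectors `e_n, …, e_{n-c+1}`. -/
def oscInfty (F : Type) [Field F] (n c : ℕ) : Submodule F (Fin (n + 1) → F) :=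
  Submodule.span F {v | ∃ i : Fin (n + 1), n + 1 ≤ i.1 + c ∧ v = Pi.single i 1}

/-- The `k`-nucleus (with `c = k+1`) of the normal rational curve: the intersection of
all its `k`-osculating subspaces. -/
def nucleus (F : Type) [Field F] (n c : ℕ) : Submodule F (Fin (n + 1) → F) :=
  (⨅ u : F, oscSub F n u c) ⊓ oscInfty F n c

/-- The top line function `T(R,b) = Σ_{σ≥R} b_σ p^σ`. (Digits of `b` with index
`σ > b` vanish, so the sum over `R ≤ σ < b+1` is the full infinite sum.) -/
def topLine (p b R : ℕ) : ℕ := ∑ σ ∈ Finset.Ico R (b + 1), digit p b σ * p ^ σ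

open Finset

section Digits

variable {p : ℕ}

def DigitsLE (p s r : ℕ) : Prop := ∀ σ, digit p s σ ≤ digit p r σ

lemma digit_div_pow (p x K σ : ℕ) : digit p (x / p ^ K) σ = digit p x (K + σ) := by
  simp [digit, pow_add, Nat.div_div_eq_div_mul]

lemma digit_mod_pow (hp : 0 < p) (x K σ : ℕ) :
    digit p (x % p ^ K) σ = if σ < K then digit p x σ else 0 := by
  split_ifs with hσ
  · obtain ⟨m, rfl⟩ := Nat.exists_eq_add_of_lt hσ
    rw [digit, digit, add_assoc, pow_add, Nat.mod_mul_right_div_self,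
      Nat.mod_mod_of_dvd _ (dvd_pow_self p (by omega))]
  · have : x % p ^ K < p ^ σ :=
      (Nat.mod_lt _ (pow_pos hp K)).trans_le (Nat.pow_le_pow_right hp (not_lt.1 hσ))
    simp [digit, Nat.div_eq_of_lt this]

lemma sum_digit_mul_pow (p x K : ℕ) : ∑ σ ∈ range K, digit p x σ * p ^ σ = x % p ^ K := by
  induction K with
  | zero => simp [Nat.mod_one]
  | succ K ih => rw [sum_range_succ, ih, Nat.mod_pow_succ, digit, mul_comm]

lemma topLine_eq_sub_mod (hp : 1 < p) (b R : ℕ) : topLine p b R = b - b % p ^ R := by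
  rcases le_or_gt R (b + 1) with hR | hR
  · have hsplit := sum_range_add_sum_Ico (fun σ => digit p b σ * p ^ σ) hR
    rw [sum_digit_mul_pow, sum_digit_mul_pow,
      Nat.mod_eq_of_lt ((Nat.lt_succ_self b).trans (Nat.lt_pow_self hp))] at hsplit
    rw [topLine]
    omega
  · have hb : b < p ^ R := (Nat.lt_pow_self hp).trans (Nat.pow_lt_pow_right hp (by omega))
    rw [topLine, Ico_eq_empty_of_le hR.le, sum_empty, Nat.mod_eq_of_lt hb, Nat.sub_self]

lemma exists_mod_pow_eq_digit_mul_pow_add {x Q R : ℕ} (hQR : Q ≤ R)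
    (hlt : x % p ^ Q < x % p ^ R) (hx : #{σ ∈ Ico Q R | digit p x σ ≠ 0} ≤ 1) :
    ∃ σ ∈ Ico Q R, x % p ^ R = digit p x σ * p ^ σ + x % p ^ Q := by
  have hsplit := sum_range_add_sum_Ico (fun σ => digit p x σ * p ^ σ) hQR
  rw [sum_digit_mul_pow, sum_digit_mul_pow,
    ← sum_filter_of_ne (p := fun σ => digit p x σ ≠ 0) fun σ _ h => left_ne_zero_of_mul h]
    at hsplit
  obtain ⟨σ, hσ⟩ := card_le_one_iff_subset_singleton.1 hx
  rcases subset_singleton_iff.1 hσ with h | h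
  · rw [h, sum_empty] at hsplit
    omega
  · have hmem : σ ∈ {σ ∈ Ico Q R | digit p x σ ≠ 0} := h ▸ mem_singleton_self σ
    rw [h, sum_singleton] at hsplit
    exact ⟨σ, (mem_filter.1 hmem).1, by omega⟩

lemma digitsLE_refl (p s : ℕ) : DigitsLE p s s := fun _ => le_rfl

lemma digitsLE_zero_left (p r : ℕ) : DigitsLE p 0 r := fun σ => by simp [digit]

lemma digitsLE_iff (hp : 0 < p) (K : ℕ) {s r : ℕ} :
    DigitsLE p s r ↔
      DigitsLE p (s % p ^ K) (r % p ^ K) ∧ DigitsLE p (s / p ^ K) (r / p ^ K) := by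
  simp only [DigitsLE, digit_mod_pow hp, digit_div_pow]
  refine ⟨fun h => ⟨fun σ => by split_ifs <;> simp [h σ], fun σ => h _⟩, ?_⟩
  rintro ⟨hlo, hhi⟩ σ
  rcases lt_or_ge σ K with hσ | hσ
  · simpa [hσ] using hlo σ
  · obtain ⟨τ, rfl⟩ := Nat.exists_eq_add_of_le hσ
    exact hhi τ

lemma DigitsLE.le (hp : 1 < p) {s r : ℕ} (h : DigitsLE p s r) : s ≤ r :=
  calc s = ∑ σ ∈ range s, digit p s σ * p ^ σ := by
        rw [sum_digit_mul_pow, Nat.mod_eq_of_lt (Nat.lt_pow_self hp)]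
    _ ≤ ∑ σ ∈ range s, digit p r σ * p ^ σ :=
        sum_le_sum fun σ _ => Nat.mul_le_mul_right _ (h σ)
    _ = r % p ^ s := sum_digit_mul_pow p r s
    _ ≤ r := Nat.mod_le r _

lemma digitsLE_iff_le_of_lt (hp : 1 < p) {s r : ℕ} (hr : r < p) : DigitsLE p s r ↔ s ≤ r := by
  refine ⟨DigitsLE.le hp, fun hsr σ => ?_⟩
  rcases σ with _ | τ
  · simpa [digit, Nat.mod_eq_of_lt hr, Nat.mod_eq_of_lt (hsr.trans_lt hr)] using hsr
  · have hpow : p ≤ p ^ (τ + 1) := Nat.le_self_pow (by omega) p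
    simp [digit, Nat.div_eq_of_lt (hsr.trans_lt (hr.trans_le hpow))]

lemma not_dvd_choose_iff_le (hp : p.Prime) {a b : ℕ} (ha : a < p) :
    ¬ p ∣ a.choose b ↔ b ≤ a := by
  refine ⟨fun h => not_lt.1 fun hab => h (by simp [Nat.choose_eq_zero_of_lt hab]),
    fun hba h => ?_⟩
  have hfact : p ∣ a.factorial :=
    h.trans ⟨_, (Nat.choose_mul_factorial_mul_factorial hba).symm.trans (mul_assoc _ _ _)⟩
  exact absurd ((Nat.Prime.dvd_factorial hp).1 hfact) (not_le.2 ha)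

theorem not_dvd_choose_iff_digitsLE (hp : p.Prime) (r s : ℕ) :
    ¬ p ∣ r.choose s ↔ DigitsLE p s r := by
  have := Fact.mk hp
  have hr : r < p ^ (r + s) := Nat.lt_pow_self hp.one_lt |>.trans_le
    (Nat.pow_le_pow_right hp.pos (Nat.le_add_right r s))
  have hs : s < p ^ (r + s) := Nat.lt_pow_self hp.one_lt |>.trans_le
    (Nat.pow_le_pow_right hp.pos (Nat.le_add_left s r))
  have hhigh : ∀ x < p ^ (r + s), ∀ σ, r + s ≤ σ → digit p x σ = 0 := fun x hx σ hσ => by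
    rw [← Nat.mod_eq_of_lt hx, digit_mod_pow hp.pos, if_neg (not_lt.2 hσ)]
  rw [(Choose.choose_modEq_prod_range_choose_nat hr hs).dvd_iff dvd_rfl,
    Prime.dvd_finsetProd_iff hp.prime]
  push Not
  have hdigit (x y : ℕ) := not_dvd_choose_iff_le hp (b := y) (Nat.mod_lt x hp.pos)
  refine ⟨fun h σ => ?_, fun h σ _ => (hdigit _ _).2 (h σ)⟩
  rcases lt_or_ge σ (r + s) with hσ | hσ
  · exact (hdigit _ _).1 (h σ (mem_range.2 hσ))
  · rw [hhigh s hs σ hσ]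
    exact Nat.zero_le _

lemma digitsLE_add_mul_pow (hp : 1 < p) {s r g h K : ℕ} (hs : s < p ^ K) (hr : r < p ^ K)
    (hsr : DigitsLE p s r) (hgh : g ≤ h) (hh : h < p) :
    DigitsLE p (s + g * p ^ K) (r + h * p ^ K) := by
  have hK : 0 < p ^ K := pow_pos (by omega) K
  rw [digitsLE_iff (by omega) K, Nat.add_mul_mod_self_right, Nat.add_mul_mod_self_right,
    Nat.mod_eq_of_lt hs, Nat.mod_eq_of_lt hr, Nat.add_mul_div_right _ _ hK,
    Nat.add_mul_div_right _ _ hK, Nat.div_eq_of_lt hs, Nat.div_eq_of_lt hr, zero_add, zero_add]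
  exact ⟨hsr, (digitsLE_iff_le_of_lt hp hh).2 hgh⟩

lemma digitsLE_pow_sub_one (hp : 1 < p) {s K : ℕ} (hs : s < p ^ K) :
    DigitsLE p s (p ^ K - 1) := by
  induction K generalizing s with
  | zero =>
    rw [pow_zero, Nat.lt_one_iff] at hs
    exact hs ▸ digitsLE_zero_left p _
  | succ K ih =>
    have hK : 0 < p ^ K := pow_pos (by omega) K
    have hdiv : s / p ^ K < p := Nat.div_lt_of_lt_mul (by rwa [← pow_succ])
    have hpow : p ^ (K + 1) - 1 = (p ^ K - 1) + (p - 1) * p ^ K := by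
      rw [pow_succ, Nat.sub_mul, one_mul, mul_comm]
      have : p ^ K ≤ p * p ^ K := Nat.le_mul_of_pos_left _ (by omega)
      omega
    rw [← Nat.mod_add_div' s (p ^ K), hpow]
    exact digitsLE_add_mul_pow hp (Nat.mod_lt _ hK) (by omega) (ih (Nat.mod_lt _ hK))
      (by omega) (by omega)

lemma exists_digitsLE_of_lt (hp : 1 < p) {β σ m j : ℕ} (hβ : β < p) (hm : m < p ^ σ)
    (hj : j < β * p ^ σ + m) :
    ∃ ρ < β * p ^ σ + m, DigitsLE p j ρ ∧ β * p ^ σ ≤ ρ + 1 := by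
  have hσ : 0 < p ^ σ := pow_pos (by omega) σ
  have hγ : j / p ^ σ ≤ β := Nat.lt_succ_iff.1 <| (Nat.div_lt_iff_lt_mul hσ).2 <| by
    rw [Nat.succ_mul]; omega
  rcases hγ.lt_or_eq with hγ | hγ
  · obtain ⟨β, rfl⟩ : ∃ β', β = β' + 1 :=
      ⟨β - 1, (Nat.sub_add_cancel (Nat.zero_le _ |>.trans_lt hγ)).symm⟩
    rw [add_one_mul] at hj ⊢
    -- the digits of `ρ` below `σ` are all `p - 1`
    refine ⟨(p ^ σ - 1) + β * p ^ σ, by omega, ?_, by omega⟩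
    rw [← Nat.mod_add_div' j (p ^ σ)]
    exact digitsLE_add_mul_pow hp (Nat.mod_lt _ hσ) (by omega)
      (digitsLE_pow_sub_one hp (Nat.mod_lt _ hσ)) (by omega) (by omega)
  · refine ⟨j, hj, digitsLE_refl p j, ?_⟩
    have : β * p ^ σ ≤ j := hγ ▸ Nat.div_mul_le_self j _
    omega

lemma card_filter_mod_lt_and_div {q m N : ℕ} (hm : m ≤ q) (P : ℕ → Prop) [DecidablePred P]
    (hP : ∀ j, P j → j ≤ N) :
    #{i ∈ range (N * q + m) | i % q < m ∧ P (i / q)} = m * #{j ∈ range (N + 1) | P j} := by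
  have hdecomp : ∀ a b, a < m → (b * q + a) % q = a ∧ (b * q + a) / q = b := fun a b ha => by
    rw [add_comm, Nat.add_mul_mod_self_right, Nat.mod_eq_of_lt (by omega),
      Nat.add_mul_div_right _ _ (by omega), Nat.div_eq_of_lt (by omega), zero_add]
    exact ⟨rfl, rfl⟩
  refine (card_nbij' (t := range m ×ˢ {j ∈ range (N + 1) | P j}) (fun i => (i % q, i / q))
    (fun x => x.2 * q + x.1) ?_ ?_ ?_ ?_).trans (by rw [card_product, card_range])
  all_goals simp only [Set.MapsTo, Set.LeftInvOn, Set.RightInvOn, coe_filter,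
    coe_product, coe_range, Set.mem_prod, Set.mem_Iio, Set.mem_ofPred_eq, mem_range, Prod.forall,
    Prod.mk.injEq]
  · exact fun i ⟨_, hi, hPi⟩ => ⟨hi, Nat.lt_succ_of_le (hP _ hPi), hPi⟩
  · intro a b ⟨ha, _, hPb⟩
    obtain ⟨hmod, hdiv⟩ := hdecomp a b ha
    rw [hmod, hdiv]
    have := Nat.mul_le_mul_right q (hP b hPb)
    exact ⟨by omega, ha, hPb⟩
  · exact fun i _ => Nat.div_add_mod' i q
  · exact fun a b ⟨ha, _⟩ => hdecomp a b ha

open scoped Classical in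
lemma card_digitsLE (hp : 1 < p) {B K : ℕ} (hB : B < p ^ K) :
    #{S ∈ range (B + 1) | DigitsLE p S B} = ∏ σ ∈ range K, (digit p B σ + 1) := by
  induction K generalizing B with
  | zero =>
    rw [pow_zero, Nat.lt_one_iff] at hB
    subst hB
    simp [filter_singleton, digitsLE_refl]
  | succ K ih =>
    have hp0 : 0 < p := by omega
    have hsplit (S : ℕ) : DigitsLE p S B ↔ S % p < B % p + 1 ∧ DigitsLE p (S / p) (B / p) := by
      rw [digitsLE_iff hp0 1, pow_one, digitsLE_iff_le_of_lt hp (Nat.mod_lt _ hp0),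
        Nat.lt_succ_iff]
    have hrange : range (B + 1) = range (B / p * p + (B % p + 1)) := by
      rw [← add_assoc, Nat.div_add_mod']
    rw [filter_congr fun S _ => hsplit S, hrange,
      card_filter_mod_lt_and_div (Nat.mod_lt B hp0) _ fun _ => DigitsLE.le hp,
      ih (Nat.div_lt_of_lt_mul (by rwa [← pow_succ'])), prod_range_succ', mul_comm]
    congr 1
    · exact prod_congr rfl fun σ _ => by rw [digit, digit, pow_succ', Nat.div_div_eq_div_mul]
    · simp [digit]

lemma add_le_or_exists_digitsLE_iff (hp : 1 < p) {n c B R M : ℕ} (hn : n + 1 = B * p ^ R + M)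
    (hM : M ≤ p ^ R) (hcM : n + 1 ≤ c + M)
    (hcov : ∀ j < M, ∃ ρ < M, DigitsLE p j ρ ∧ c ≤ B * p ^ R + ρ) (i : ℕ) :
    (i + c ≤ n ∨ ∃ r, c ≤ r ∧ r ≤ n ∧ DigitsLE p i r) ↔
      i % p ^ R < M ∧ DigitsLE p (i / p ^ R) B := by
  have hR : 0 < p ^ R := pow_pos (by omega) R
  have hdecomp : ∀ ρ < M, (B * p ^ R + ρ) % p ^ R = ρ ∧ (B * p ^ R + ρ) / p ^ R = B :=
    fun ρ hρ => by
      rw [add_comm, Nat.add_mul_mod_self_right, Nat.mod_eq_of_lt (by omega),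
        Nat.add_mul_div_right _ _ hR, Nat.div_eq_of_lt (by omega), zero_add]
      exact ⟨rfl, rfl⟩
  constructor
  · rintro (hi | ⟨r, hcr, hrn, hir⟩)
    · have hi' : i < p ^ R := by omega
      rw [Nat.mod_eq_of_lt hi', Nat.div_eq_of_lt hi']
      exact ⟨by omega, digitsLE_zero_left p B⟩
    · obtain ⟨ρ, rfl⟩ : ∃ ρ, r = B * p ^ R + ρ := ⟨r - B * p ^ R, by omega⟩
      obtain ⟨hmod, hdiv⟩ := hdecomp ρ (by omega)
      rw [digitsLE_iff (by omega) R, hmod, hdiv] at hir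
      exact ⟨(DigitsLE.le hp hir.1).trans_lt (by omega), hir.2⟩
  · rintro ⟨hi, hiB⟩
    obtain ⟨ρ, hρ, hiρ, hcρ⟩ := hcov _ hi
    obtain ⟨hmod, hdiv⟩ := hdecomp ρ hρ
    refine Or.inr ⟨B * p ^ R + ρ, hcρ, by omega, ?_⟩
    rw [digitsLE_iff (by omega) R, hmod, hdiv]
    exact ⟨hiρ, hiB⟩

open scoped Classical in
lemma card_filter_forall_not_digitsLE (hp : 1 < p) {n c B R M K : ℕ}
    (hn : n + 1 = B * p ^ R + M) (hM : M ≤ p ^ R) (hcM : n + 1 ≤ c + M)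
    (hcov : ∀ j < M, ∃ ρ < M, DigitsLE p j ρ ∧ c ≤ B * p ^ R + ρ) (hB : B < p ^ K) :
    #{i ∈ range (n + 1) | n + 1 ≤ i + c ∧ ∀ r, c ≤ r → r ≤ n → ¬ DigitsLE p i r} =
      n + 1 - M * ∏ σ ∈ range K, (digit p B σ + 1) := by
  have hbad :
      #{i ∈ range (n + 1) | ¬ (n + 1 ≤ i + c ∧ ∀ r, c ≤ r → r ≤ n → ¬ DigitsLE p i r)} =
        M * ∏ σ ∈ range K, (digit p B σ + 1) := by
    have hiff : ∀ i, ¬ (n + 1 ≤ i + c ∧ ∀ r, c ≤ r → r ≤ n → ¬ DigitsLE p i r) ↔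
        i % p ^ R < M ∧ DigitsLE p (i / p ^ R) B := fun i => by
      rw [← add_le_or_exists_digitsLE_iff hp hn hM hcM hcov]
      simp only [not_and_or, not_le, not_forall, not_not, exists_prop, Nat.lt_succ_iff]
    rw [filter_congr fun i _ => hiff i, hn,
      card_filter_mod_lt_and_div hM _ fun _ => DigitsLE.le hp, card_digitsLE hp hB]
  have hsum := card_filter_add_card_filter_not (s := range (n + 1))
    fun i => n + 1 ≤ i + c ∧ ∀ r, c ≤ r → r ≤ n → ¬ DigitsLE p i r
  rw [card_range, hbad] at hsum
  omega

lemma succ_mod_eq_mod_add_one {n q : ℕ} (h : (n + 1) % q ≠ 0) : (n + 1) % q = n % q + 1 := by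
  rcases Nat.eq_zero_or_pos q with rfl | hq
  · simp
  rw [← Nat.mod_add_mod] at h ⊢
  exact Nat.mod_eq_of_lt
    (Nat.lt_of_le_of_ne (Nat.mod_lt n hq) fun h' => h (by rw [h', Nat.mod_self]))

open scoped Classical in
theorem card_filter_forall_not_digitsLE_of_topLine (hp : 1 < p) {n c Q R : ℕ} (hQR : Q ≤ R)
    (h1 : topLine p (n + 1) R ≤ c) (h2 : c < topLine p (n + 1) Q)
    (h3 : #{σ ∈ Ico Q R | digit p (n + 1) σ ≠ 0} ≤ 1) :
    #{i ∈ range (n + 1) | n + 1 ≤ i + c ∧ ∀ r, c ≤ r → r ≤ n → ¬ DigitsLE p i r} =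
      n + 1 - (1 + ∑ μ ∈ range R, digit p n μ * p ^ μ) *
        ∏ σ ∈ Ico R (n + 1), (digit p n σ + 1) := by
  have hR : 0 < p ^ R := pow_pos (by omega) R
  rw [topLine_eq_sub_mod hp] at h1 h2
  have hlt : (n + 1) % p ^ Q < (n + 1) % p ^ R := by
    have := Nat.mod_le (n + 1) (p ^ R)
    have := Nat.mod_le (n + 1) (p ^ Q)
    omega
  obtain ⟨σ, hσ, hsplit⟩ := exists_mod_pow_eq_digit_mul_pow_add hQR hlt h3
  rw [succ_mod_eq_mod_add_one ((Nat.zero_le _).trans_lt hlt).ne'] at h1 hsplit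
  have hnR : n + 1 = n / p ^ R * p ^ R + (n % p ^ R + 1) := by rw [← add_assoc, Nat.div_add_mod']
  have hcov : ∀ j < n % p ^ R + 1, ∃ ρ < n % p ^ R + 1,
      DigitsLE p j ρ ∧ c ≤ n / p ^ R * p ^ R + ρ := by
    intro j hj
    rw [hsplit] at hj ⊢
    have hQσ : (n + 1) % p ^ Q < p ^ σ := (Nat.mod_lt _ (pow_pos (by omega) Q)).trans_le
      (Nat.pow_le_pow_right (by omega) (mem_Ico.1 hσ).1)
    obtain ⟨ρ, hρ, hjρ, hρσ⟩ :=
      exists_digitsLE_of_lt (β := digit p (n + 1) σ) hp (Nat.mod_lt _ (by omega)) hQσ hj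
    rw [hsplit] at hnR
    exact ⟨ρ, hρ, hjρ, by omega⟩
  have hB : n / p ^ R < p ^ (n + 1 - R) := Nat.div_lt_of_lt_mul <|
    calc n < p ^ n := Nat.lt_pow_self hp
      _ ≤ p ^ (R + (n + 1 - R)) := Nat.pow_le_pow_right (by omega) (by omega)
      _ = p ^ R * p ^ (n + 1 - R) := pow_add p R _
  rw [card_filter_forall_not_digitsLE hp hnR (Nat.mod_lt _ hR) (by omega) hcov hB,
    sum_digit_mul_pow, prod_Ico_eq_prod_range, add_comm 1]
  simp only [digit_div_pow]

lemma card_filter_univ_fin_eq_range (m : ℕ) (P : ℕ → Prop) [DecidablePred P] :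
    #{i : Fin m | P i} = #{i ∈ range m | P i} := by
  rw [card_filter, card_filter]
  exact Fin.sum_univ_eq_sum_range (fun i => if P i then 1 else 0) m

end Digits

section Pascal

variable {A : Type*} [CommRing A]

lemma sum_choose_mul_pow_mul_choose_mul_pow (x y : A) {r N : ℕ} (hr : r ≤ N) (t : ℕ) :
    ∑ s ∈ range (N + 1), (r.choose s : A) * x ^ (r - s) * ((s.choose t : A) * y ^ (s - t)) =
      r.choose t * (x + y) ^ (r - t) := by
  have hvanish : ∀ s ∈ range (N + 1), s ∉ Ico t (r + 1) →
      (r.choose s : A) * x ^ (r - s) * ((s.choose t : A) * y ^ (s - t)) = 0 := by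
    intro s _ hs
    rcases lt_or_ge s t with hst | hts
    · simp [Nat.choose_eq_zero_of_lt hst]
    · simp [Nat.choose_eq_zero_of_lt (show r < s by simp only [mem_Ico] at hs; omega)]
  rw [← sum_subset (fun s hs => by simp only [mem_Ico, mem_range] at hs ⊢; omega) hvanish,
    sum_Ico_eq_sum_range]
  rcases le_or_gt t r with htr | htr
  · rw [show r + 1 - t = r - t + 1 by omega, add_comm x y, add_pow, mul_sum]
    refine sum_congr rfl fun i hi => ?_
    have hchoose : (r.choose (t + i) : A) * ((t + i).choose t : A) =
        (r.choose t : A) * ((r - t).choose i : A) := by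
      have := Nat.choose_mul (n := r) (Nat.le_add_right t i)
      rw [Nat.add_sub_cancel_left] at this
      rw [← Nat.cast_mul, ← Nat.cast_mul, this]
    rw [show r - (t + i) = r - t - i by omega, Nat.add_sub_cancel_left]
    linear_combination x ^ (r - t - i) * y ^ i * hchoose
  · simp [Nat.choose_eq_zero_of_lt htr, show r + 1 - t = 0 by omega]

/-- The matrix of the Taylor shift `f(X) ↦ f(X + u)` on polynomials of degree `≤ n`; its
first `c` columns span `oscSub F n u c`. -/
def pascalMatrix (A : Type*) [CommRing A] (n : ℕ) (u : A) :
    Matrix (Fin (n + 1)) (Fin (n + 1)) A :=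
  Matrix.of fun r s => (r.1.choose s.1 : A) * u ^ (r.1 - s.1)

lemma pascalMatrix_mul (n : ℕ) (u v : A) :
    pascalMatrix A n u * pascalMatrix A n v = pascalMatrix A n (u + v) := by
  ext r t
  simp only [pascalMatrix, Matrix.mul_apply, Matrix.of_apply]
  rw [Fin.sum_univ_eq_sum_range
      (fun s => (r.1.choose s : A) * u ^ (r.1 - s) * ((s.choose t.1 : A) * v ^ (s - t.1))),
    sum_choose_mul_pow_mul_choose_mul_pow u v (Nat.lt_succ_iff.1 r.2)]

lemma pascalMatrix_zero (n : ℕ) : pascalMatrix A n 0 = 1 := by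
  ext r s
  rcases lt_trichotomy r s with h | rfl | h
  · simp [pascalMatrix, Matrix.one_apply_ne h.ne, Nat.choose_eq_zero_of_lt (Fin.lt_def.1 h)]
  · simp [pascalMatrix]
  · simp [pascalMatrix, Matrix.one_apply_ne h.ne', Nat.sub_ne_zero_of_lt (Fin.lt_def.1 h)]

lemma pascalMatrix_neg_mul_self (n : ℕ) (u : A) :
    pascalMatrix A n (-u) * pascalMatrix A n u = 1 := by
  rw [pascalMatrix_mul, neg_add_cancel, pascalMatrix_zero]

lemma pascalMatrix_mul_neg_self (n : ℕ) (u : A) :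
    pascalMatrix A n u * pascalMatrix A n (-u) = 1 := by
  rw [pascalMatrix_mul, add_neg_cancel, pascalMatrix_zero]

end Pascal

section Nucleus

open Polynomial Matrix

variable {F : Type} [Field F] {n c : ℕ}

lemma pascalMatrix_neg_mulVec_apply_eq_zero {u : F} {v : Fin (n + 1) → F}
    (hv : v ∈ oscSub F n u c) {r : Fin (n + 1)} (hr : c ≤ r) :
    (pascalMatrix F n (-u) *ᵥ v) r = 0 := by
  suffices oscSub F n u c ≤
      LinearMap.ker ((LinearMap.proj r).comp (pascalMatrix F n (-u)).mulVecLin) from this hv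
  rw [oscSub, Submodule.span_le]
  rintro _ ⟨s, rfl⟩
  have hs : s.1 < n + 1 := by omega
  have hcol := congrFun (congrFun (pascalMatrix_neg_mul_self n u) r) ⟨s, hs⟩
  rw [Matrix.mul_apply, Matrix.one_apply_ne (Fin.ne_of_val_ne (by simp; omega))] at hcol
  exact hcol

lemma single_mem_oscSub (u : F) {i : Fin (n + 1)}
    (hi : ∀ s : ℕ, c ≤ s → s ≤ n → (s.choose i : F) = 0) :
    Pi.single i 1 ∈ oscSub F n u c := by
  have hsum : Pi.single i (1 : F) =
      ∑ s : Fin (n + 1), pascalMatrix F n (-u) s i • fun r => pascalMatrix F n u r s := by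
    ext r
    have hcol := congrFun (congrFun (pascalMatrix_mul_neg_self n u) r) i
    rw [Matrix.mul_apply, Matrix.one_apply] at hcol
    simp only [Finset.sum_apply, Pi.smul_apply, smul_eq_mul, Pi.single_apply, ← hcol, mul_comm]
  rw [hsum]
  refine Submodule.sum_mem _ fun s _ => ?_
  rcases lt_or_ge s.1 c with hs | hs
  · exact Submodule.smul_mem _ _ (Submodule.subset_span ⟨⟨s, hs⟩, rfl⟩)
  · have : pascalMatrix F n (-u) s i = 0 := by
      simp [pascalMatrix, hi s hs (Nat.lt_succ_iff.1 s.2)]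
    rw [this, zero_smul]
    exact zero_mem _

lemma apply_eq_zero_of_mem_oscInfty {v : Fin (n + 1) → F} (hv : v ∈ oscInfty F n c)
    {i : Fin (n + 1)} (hi : i + c ≤ n) : v i = 0 := by
  suffices oscInfty F n c ≤ LinearMap.ker (LinearMap.proj i) from this hv
  rw [oscInfty, Submodule.span_le]
  rintro _ ⟨j, hj, rfl⟩
  simp [Fin.ne_of_val_ne (show i.1 ≠ j.1 by omega)]

lemma single_mem_oscInfty {i : Fin (n + 1)} (hi : n + 1 ≤ i + c) :
    Pi.single i (1 : F) ∈ oscInfty F n c :=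
  Submodule.subset_span ⟨i, hi, rfl⟩

lemma eq_zero_of_forall_sum_mul_pow_eq_zero {ι : Type*} [Fintype ι] {a : ι → F} {e : ι → ℕ}
    (hF : (c : Cardinal) ≤ Cardinal.mk F) (he : ∀ i, a i ≠ 0 → e i < c)
    (hinj : Set.InjOn e {i | a i ≠ 0}) (h : ∀ u : F, ∑ i, a i * u ^ e i = 0) (i : ι) :
    a i = 0 := by
  by_contra hai
  set f : F[X] := ∑ j, C (a j) * X ^ e j
  have hdeg : f.natDegree ≤ c - 1 := natDegree_sum_le_of_forall_le _ _ fun j _ => by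
    by_cases haj : a j = 0
    · simp [haj]
    · exact (natDegree_C_mul_X_pow_le _ _).trans (by have := he j haj; omega)
  have hf : f = 0 := eq_zero_of_forall_eval_zero_of_natDegree_lt_card f
    (fun u => by simpa [f, eval_finsetSum] using h u)
    ((Nat.cast_lt.2 (by have := he i hai; omega : f.natDegree < c)).trans_le hF)
  have hcoeff := congrArg (coeff · (e i)) hf
  simp only [f, finsetSum_coeff, coeff_C_mul_X_pow, coeff_zero] at hcoeff
  rw [sum_eq_single i (fun j _ hji => ?_) (by simp), if_pos rfl] at hcoeff
  · exact hai hcoeff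
  · by_cases haj : a j = 0
    · simp [haj]
    · exact if_neg fun hij => hji (hinj haj hai hij.symm)

def IsNucleusIndex (F : Type) [Field F] (n c : ℕ) (i : Fin (n + 1)) : Prop :=
  n + 1 ≤ i + c ∧ ∀ r : ℕ, c ≤ r → r ≤ n → (r.choose i : F) = 0

lemma apply_eq_zero_of_mem_nucleus (hF : (c : Cardinal) ≤ Cardinal.mk F)
    {x : Fin (n + 1) → F} (hx : x ∈ nucleus F n c) {i : Fin (n + 1)}
    (hi : ¬ IsNucleusIndex F n c i) : x i = 0 := by
  have hlow : ∀ t : Fin (n + 1), t + c ≤ n → x t = 0 := fun t ht =>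
    apply_eq_zero_of_mem_oscInfty (Submodule.mem_inf.1 hx).2 ht
  simp only [IsNucleusIndex, not_and_or, not_le, not_forall, exists_prop] at hi
  rcases hi with hi | ⟨r, hcr, hrn, hri⟩
  · exact hlow i (by omega)
  have hpoly (u : F) : ∑ t : Fin (n + 1), (r.choose t : F) * x t * u ^ (r - t) = 0 := by
    have hu := pascalMatrix_neg_mulVec_apply_eq_zero
      ((Submodule.mem_iInf _).1 (Submodule.mem_inf.1 hx).1 (-u)) (r := ⟨r, by omega⟩) hcr
    rw [neg_neg] at hu
    rw [← hu]
    exact sum_congr rfl fun t _ => by simp only [pascalMatrix, of_apply]; ring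
  refine (mul_eq_zero.1 (eq_zero_of_forall_sum_mul_pow_eq_zero hF
    (a := fun t : Fin (n + 1) => (r.choose t : F) * x t) (e := fun t => r - t)
    (fun t ht => ?_) (fun t ht t' ht' htt' => ?_) hpoly i)).resolve_left hri
  · have := mt (hlow t) (right_ne_zero_of_mul ht)
    omega
  · have hle : ∀ s : Fin (n + 1), (r.choose s : F) * x s ≠ 0 → s.1 ≤ r := fun s hs =>
      not_lt.1 fun hrs => hs (by simp [Nat.choose_eq_zero_of_lt hrs])
    have := hle t ht
    have := hle t' ht'
    exact Fin.ext (by simp only at htt'; omega)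

lemma nucleus_eq_span (hF : (c : Cardinal) ≤ Cardinal.mk F) :
    nucleus F n c =
      Submodule.span F (Set.range fun i : {i // IsNucleusIndex F n c i} => Pi.single i.1 1) := by
  refine le_antisymm (fun x hx => ?_) (Submodule.span_le.2 ?_)
  · rw [← Finset.univ_sum_single x]
    refine Submodule.sum_mem _ fun i _ => ?_
    by_cases hi : IsNucleusIndex F n c i
    · rw [← mul_one (x i), ← smul_eq_mul, Pi.single_smul]
      exact Submodule.smul_mem _ _ (Submodule.subset_span ⟨⟨i, hi⟩, rfl⟩)
    · rw [apply_eq_zero_of_mem_nucleus hF hx hi, Pi.single_zero]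
      exact zero_mem _
  · rintro _ ⟨⟨i, hi⟩, rfl⟩
    exact Submodule.mem_inf.2
      ⟨Submodule.mem_iInf _ |>.2 fun u => single_mem_oscSub u hi.2, single_mem_oscInfty hi.1⟩

open scoped Classical in
theorem finrank_nucleus (hF : (c : Cardinal) ≤ Cardinal.mk F) :
    Module.finrank F (nucleus F n c) = #{i : Fin (n + 1) | IsNucleusIndex F n c i} := by
  rw [nucleus_eq_span hF, finrank_span_eq_card, Fintype.card_subtype]
  convert (Pi.basisFun F (Fin (n + 1))).linearIndependent.comp Subtype.val Subtype.val_injective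
  simp

lemma isNucleusIndex_iff {p : ℕ} [CharP F p] (hp : p.Prime) (i : Fin (n + 1)) :
    IsNucleusIndex F n c i ↔ n + 1 ≤ i + c ∧ ∀ r, c ≤ r → r ≤ n → ¬ DigitsLE p i r := by
  simp only [IsNucleusIndex, CharP.cast_eq_zero_iff F p, ← not_dvd_choose_iff_digitsLE hp,
    not_not]

end Nucleus

theorem nucleus_finrank_general (F : Type) [Field F] (p : ℕ) (hp : p.Prime) [CharP F p]
    (n c Q R : ℕ) (hQR : Q ≤ R)
    (hF : (c : Cardinal) ≤ Cardinal.mk F)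
    (h1 : topLine p (n + 1) R ≤ c) (h2 : c < topLine p (n + 1) Q)
    (h3 : ((Finset.Ico Q R).filter fun σ => digit p (n + 1) σ ≠ 0).card ≤ 1) :
    Module.finrank F (nucleus F n c)
      = n + 1 - (1 + ∑ μ ∈ Finset.range R, digit p n μ * p ^ μ) *
          ∏ σ ∈ Finset.Ico R (n + 1), (digit p n σ + 1) := by
  classical
  rw [finrank_nucleus hF, filter_congr fun i _ => isNucleusIndex_iff hp i,
    card_filter_univ_fin_eq_range (n + 1)
      fun i => n + 1 ≤ i + c ∧ ∀ r, c ≤ r → r ≤ n → ¬ DigitsLE p i r,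
    card_filter_forall_not_digitsLE_of_topLine hp.one_lt hQR h1 h2 h3]

/-- Dimension of the `k`-nucleus (`c = k+1`): if `char F = p > 0`, `#F ≥ k+1`,
`T(R,b) ≤ k+1 < T(Q,b)` for `b := n+1`, and at most one digit `b_σ` with
`Q ≤ σ < R` is non-zero, then the `k`-nucleus of `V_1^n` has projective dimension
`n − (1 + Σ_{μ<R} n_μ p^μ) · ∏_{σ≥R} (n_σ+1)`, i.e. vector-space dimension
`n + 1 − (1 + Σ_{μ<R} n_μ p^μ) · ∏_{σ≥R} (n_σ+1)`. -/
theorem nucleus_finrank (F : Type) [Field F] (p : ℕ) (hp : p.Prime) [CharP F p]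
    (n c Q R : ℕ) (hn : 2 ≤ n) (hQR : Q ≤ R)
    (hF : (c : Cardinal) ≤ Cardinal.mk F)
    (h1 : topLine p (n + 1) R ≤ c) (h2 : c < topLine p (n + 1) Q)
    (h3 : ((Finset.Ico Q R).filter fun σ => digit p (n + 1) σ ≠ 0).card ≤ 1) :
    Module.finrank F (nucleus F n c)
      = n + 1 - (1 + ∑ μ ∈ Finset.range R, digit p n μ * p ^ μ) *
          ∏ σ ∈ Finset.Ico R (n + 1), (digit p n σ + 1) :=
  nucleus_finrank_general F p hp n c Q R hQR hF h1 h2 h3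
end
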